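/- Let θ^n : pairs of times → ℝ^{d₂} be increment functions and suppose (2^n/κ)·Σ_{k=1}^{2^n} |θ^n(t_{k-1}^n, t_k^n)| is bounded uniformly in n, where θ^n(t_{k-1},t_k) are the increments of continuous functions θ^n : [0,1] → ℝ^{d₂} with θ^n → θ uniformly. Then θ ≡ 0. -/

import Mathlib

/-!
On the grid of mesh `2⁻ⁿ`, the function `θⁿ` starts at `0` and its total variation is at most
`κ M 2⁻ⁿ`, so it is uniformly `O(2⁻ⁿ)` at the grid points. The grid point `⌊t 2ⁿ⌋ / 2ⁿ` tends
to `t`, and the limit `θ` is continuous, so `θⁿ` evaluated there tends both to `θ t` and to `0`.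
-/

open Filter Topology

theorem norm_le_sum_norm_sub_of_map_zero {E : Type*} [SeminormedAddCommGroup E] {f : ℕ → E}
    (h0 : f 0 = 0) {j N : ℕ} (hj : j ≤ N) :
    ‖f j‖ ≤ ∑ k ∈ Finset.range N, ‖f (k + 1) - f k‖ :=
  calc ‖f j‖ = ‖∑ k ∈ Finset.range j, (f (k + 1) - f k)‖ := by
        rw [Finset.sum_range_sub, h0, sub_zero]
    _ ≤ ∑ k ∈ Finset.range j, ‖f (k + 1) - f k‖ := norm_sum_le _ _
    _ ≤ ∑ k ∈ Finset.range N, ‖f (k + 1) - f k‖ :=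
        Finset.sum_le_sum_of_subset_of_nonneg (Finset.range_mono hj) fun _ _ _ => norm_nonneg _

theorem norm_apply_div_two_pow_le {E : Type*} [SeminormedAddCommGroup E] {F : ℝ → E}
    (h0 : F 0 = 0) {κ M : ℝ} (hκ : 0 < κ) {n : ℕ}
    (hvar : (2 ^ n / κ) * ∑ k ∈ Finset.range (2 ^ n),
        ‖F ((k + 1 : ℕ) / 2 ^ n) - F ((k : ℕ) / 2 ^ n)‖ ≤ M)
    {j : ℕ} (hj : j ≤ 2 ^ n) :
    ‖F (j / 2 ^ n)‖ ≤ κ * M / 2 ^ n := by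
  have htel := norm_le_sum_norm_sub_of_map_zero (f := fun k : ℕ => F (k / 2 ^ n))
    (by simpa using h0) hj
  rw [div_mul_eq_mul_div, div_le_iff₀ hκ] at hvar
  rw [le_div_iff₀ (by positivity)]
  calc ‖F (j / 2 ^ n)‖ * 2 ^ n
      ≤ (∑ k ∈ Finset.range (2 ^ n), ‖F ((k + 1 : ℕ) / 2 ^ n) - F ((k : ℕ) / 2 ^ n)‖) * 2 ^ n :=
        mul_le_mul_of_nonneg_right htel (by positivity)
    _ ≤ κ * M := by linarith

theorem natFloor_mul_two_pow_le {t : ℝ} (ht : t ≤ 1) (n : ℕ) : ⌊t * 2 ^ n⌋₊ ≤ 2 ^ n :=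
  Nat.floor_le_of_le <| by exact_mod_cast mul_le_of_le_one_left (by positivity) ht

theorem natFloor_mul_two_pow_div_mem_Icc {t : ℝ} (ht : t ≤ 1) (n : ℕ) :
    (⌊t * 2 ^ n⌋₊ : ℝ) / 2 ^ n ∈ Set.Icc (0 : ℝ) 1 :=
  ⟨by positivity, (div_le_one (by positivity)).2 (by exact_mod_cast natFloor_mul_two_pow_le ht n)⟩

theorem tendsto_natFloor_mul_two_pow_div {t : ℝ} (ht : 0 ≤ t) :
    Tendsto (fun n : ℕ => (⌊t * 2 ^ n⌋₊ : ℝ) / 2 ^ n) atTop (𝓝 t) :=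
  (tendsto_nat_floor_mul_div_atTop ht).comp (tendsto_pow_atTop_atTop_of_one_lt one_lt_two)

/-- Let `θⁿ : [0,1] → ℝ^{d₂}` be continuous functions starting at `0`, converging uniformly
to `θ`, and suppose `(2^n/κ) Σ_{k=1}^{2^n} |θⁿ(t_k^n) - θⁿ(t_{k-1}^n)|` is bounded uniformly
in `n` (with `t_k^n = k 2^{-n}` and `κ > 0`).  Then `θ ≡ 0` on `[0,1]`. -/
theorem stmt_15 (d₂ : ℕ) (κ M : ℝ) (hκ : 0 < κ)
    (θn : ℕ → ℝ → EuclideanSpace ℝ (Fin d₂)) (θ : ℝ → EuclideanSpace ℝ (Fin d₂))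
    (hcont : ∀ n, ContinuousOn (θn n) (Set.Icc 0 1))
    (hzero : ∀ n, θn n 0 = 0)
    (hunif : TendstoUniformlyOn θn θ atTop (Set.Icc 0 1))
    (hbdd : ∀ n : ℕ, (2 ^ n / κ) * ∑ k ∈ Finset.range (2 ^ n),
        ‖θn n ((k + 1 : ℕ) / 2 ^ n) - θn n ((k : ℕ) / 2 ^ n)‖ ≤ M) :
    ∀ t ∈ Set.Icc (0 : ℝ) 1, θ t = 0 := by
  intro t ht
  set s : ℕ → ℝ := fun n => (⌊t * 2 ^ n⌋₊ : ℝ) / 2 ^ n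
  have hs : Tendsto s atTop (𝓝[Set.Icc 0 1] t) :=
    tendsto_nhdsWithin_iff.2 ⟨tendsto_natFloor_mul_two_pow_div ht.1,
      Eventually.of_forall (natFloor_mul_two_pow_div_mem_Icc ht.2)⟩
  have hθ : ContinuousOn θ (Set.Icc 0 1) :=
    hunif.continuousOn (Eventually.of_forall hcont).frequently
  have hlim : Tendsto (fun n => θn n (s n)) atTop (𝓝 (θ t)) :=
    hunif.tendsto_comp (hθ t ht) hs
  have hsmall : Tendsto (fun n => θn n (s n)) atTop (𝓝 0) :=
    squeeze_zero_norm
      (fun n => norm_apply_div_two_pow_le (hzero n) hκ (hbdd n) (natFloor_mul_two_pow_le ht.2 n))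
      (tendsto_const_nhds.div_atTop (tendsto_pow_atTop_atTop_of_one_lt one_lt_two))
  exact tendsto_nhds_unique hlim hsmall
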